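/- arXiv:2011.10036 — 2 statements merged into one kernel-verified Lean document; each statement's English description precedes it below -/
import Mathlib

section
/- Let s : ℝ → ℝ and v : ℝ → ℝ^d be differentiable functions, let m > 0 be a constant, and suppose they satisfy the coupled ODE (1 + exp(s(t))/m) · s'(t) = v(t)ᵀ v'(t) for all t. Then for all t₀ ≤ t₁, [s(t) + exp(s(t))/m] evaluated from t₀ to t₁ equals [½‖v(t)‖₂²] evaluated from t₀ to t₁; i.e., s(t) + exp(s(t))/m − ½‖v(t)‖₂² is constant in t. -/
open Real

theorem sub_eq_sub_of_hasDerivAt_eq {𝕜 G : Type*} [RCLike 𝕜] [NormedAddCommGroup G]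
    [NormedSpace 𝕜 G] {f g φ : 𝕜 → G} (hf : ∀ t, HasDerivAt f (φ t) t)
    (hg : ∀ t, HasDerivAt g (φ t) t) (a b : 𝕜) : f b - f a = g b - g a := by
  have hdiff (t : 𝕜) : HasDerivAt (f - g) 0 t := by
    simpa using (hf t).sub (hg t)
  have hconst : f b - g b = f a - g a :=
    is_const_of_deriv_eq_zero (fun t => (hdiff t).differentiableAt) (fun t => (hdiff t).deriv) b a
  rw [sub_eq_sub_iff_sub_eq_sub, hconst]

theorem hasDerivAt_add_exp_div {s : ℝ → ℝ} {s' t : ℝ} (hs : HasDerivAt s s' t) (m : ℝ) :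
    HasDerivAt (fun t => s t + exp (s t) / m) ((1 + exp (s t) / m) * s') t :=
  (hs.add (hs.exp.div_const m)).congr_deriv (by ring)

theorem hasDerivAt_half_norm_sq {F : Type*} [NormedAddCommGroup F] [InnerProductSpace ℝ F]
    {v : ℝ → F} {v' : F} {t : ℝ} (hv : HasDerivAt v v' t) :
    HasDerivAt (fun t => (1 / 2) * ‖v t‖ ^ 2) (inner ℝ (v t) v') t :=
  (hv.norm_sq.const_mul (1 / 2 : ℝ)).congr_deriv (by ring)

theorem sen_conservation_general (d : ℕ) (m : ℝ)
    (s : ℝ → ℝ) (v : ℝ → EuclideanSpace ℝ (Fin d))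
    (hs : Differentiable ℝ s) (hv : Differentiable ℝ v)
    (hode : ∀ t, (1 + Real.exp (s t) / m) * deriv s t
      = (inner ℝ (v t) (deriv v t) : ℝ)) :
    ∀ t₀ t₁ : ℝ, t₀ ≤ t₁ →
      (s t₁ + Real.exp (s t₁) / m) - (s t₀ + Real.exp (s t₀) / m)
        = (1 / 2) * ‖v t₁‖ ^ 2 - (1 / 2) * ‖v t₀‖ ^ 2 := by
  intro t₀ t₁ _
  have hlhs (t : ℝ) : HasDerivAt (fun t => s t + exp (s t) / m) (inner ℝ (v t) (deriv v t)) t :=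
    hode t ▸ hasDerivAt_add_exp_div (hs t).hasDerivAt m
  exact sub_eq_sub_of_hasDerivAt_eq hlhs
    (fun t => hasDerivAt_half_norm_sq (hv t).hasDerivAt) t₀ t₁

theorem sen_conservation (d : ℕ) (m : ℝ) (hm : 0 < m)
    (s : ℝ → ℝ) (v : ℝ → EuclideanSpace ℝ (Fin d))
    (hs : Differentiable ℝ s) (hv : Differentiable ℝ v)
    (hode : ∀ t, (1 + Real.exp (s t) / m) * deriv s t
      = (inner ℝ (v t) (deriv v t) : ℝ)) :
    ∀ t₀ t₁ : ℝ, t₀ ≤ t₁ →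
      (s t₁ + Real.exp (s t₁) / m) - (s t₀ + Real.exp (s t₀) / m)
        = (1 / 2) * ‖v t₁‖ ^ 2 - (1 / 2) * ‖v t₀‖ ^ 2 :=
  sen_conservation_general d m s v hs hv hode
end

section
/- Let s : ℝ → ℝ and v : ℝ → ℝ^d satisfy the coupled ODE (1 + exp(s(t))/m)·s'(t) = v(t)ᵀ v'(t) with s(0)=0 and v(0)=0, where m > 0. If ‖v(t)‖₂ → ∞ as t → ∞, then s(t) → ∞ as t → ∞. -/
/-!
The ODE says exactly that `‖v‖² / 2 - (s + exp s / m)` has derivative zero, so with the initial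
conditions `‖v t‖² = 2 (s t + exp (s t) / m - 1 / m)`. For `m > 0` the map `x ↦ x + exp x / m` is
strictly increasing, so it can only tend to infinity along `s t` if `s t` itself does.
-/

open Filter

theorem Monotone.tendsto_atTop_of_tendsto_comp {α β γ : Type*} [LinearOrder β] [Preorder γ]
    [NoMaxOrder γ] {g : β → γ} {f : α → β} {l : Filter α} (hg : Monotone g)
    (h : Tendsto (g ∘ f) l atTop) : Tendsto f l atTop := by
  rw [tendsto_atTop]
  intro b
  obtain ⟨c, hc⟩ := exists_gt (g b)
  filter_upwards [h.eventually_ge_atTop c] with t ht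
  by_contra! hlt
  exact (hc.trans_le ht).not_ge (hg hlt.le)

noncomputable def senPotential (m x : ℝ) : ℝ := x + Real.exp x / m

theorem senPotential_strictMono {m : ℝ} (hm : 0 < m) : StrictMono (senPotential m) :=
  strictMono_id.add (Real.exp_strictMono.div_const hm)

section Conservation

variable {E : Type*} [NormedAddCommGroup E] [InnerProductSpace ℝ E] {m : ℝ} {s : ℝ → ℝ}
  {v : ℝ → E}

theorem hasDerivAt_norm_sq_sub_senPotential (hs : Differentiable ℝ s) (hv : Differentiable ℝ v)
    (hode : ∀ t, (1 + Real.exp (s t) / m) * deriv s t = inner ℝ (v t) (deriv v t)) (t : ℝ) :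
    HasDerivAt (fun t => ‖v t‖ ^ 2 - 2 * senPotential m (s t)) 0 t := by
  have hvt := (hv t).hasDerivAt
  have hst := (hs t).hasDerivAt
  refine (hvt.norm_sq.sub ((hst.add (hst.exp.div_const m)).const_mul 2)).congr_deriv ?_
  rw [← hode t]
  ring

theorem norm_sq_eq_two_mul_senPotential_sub (hs : Differentiable ℝ s) (hv : Differentiable ℝ v)
    (hode : ∀ t, (1 + Real.exp (s t) / m) * deriv s t = inner ℝ (v t) (deriv v t))
    (hs0 : s 0 = 0) (hv0 : v 0 = 0) (t : ℝ) :
    ‖v t‖ ^ 2 = 2 * (senPotential m (s t) - senPotential m 0) := by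
  have hconst := is_const_of_deriv_eq_zero
    (fun x => (hasDerivAt_norm_sq_sub_senPotential hs hv hode x).differentiableAt)
    (fun x => (hasDerivAt_norm_sq_sub_senPotential hs hv hode x).deriv) t 0
  rw [hs0, hv0, norm_zero] at hconst
  linarith

end Conservation

theorem score_diverges_of_embedding_diverges (d : ℕ) (m : ℝ) (hm : 0 < m)
    (s : ℝ → ℝ) (v : ℝ → EuclideanSpace ℝ (Fin d))
    (hs : Differentiable ℝ s) (hv : Differentiable ℝ v)
    (hode : ∀ t, (1 + Real.exp (s t) / m) * deriv s t
      = (inner ℝ (v t) (deriv v t) : ℝ))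
    (hs0 : s 0 = 0) (hv0 : v 0 = 0)
    (hdiv : Tendsto (fun t => ‖v t‖) atTop atTop) :
    Tendsto s atTop atTop := by
  refine (senPotential_strictMono hm).monotone.tendsto_atTop_of_tendsto_comp ?_
  have hnorm_sq : Tendsto (fun t => ‖v t‖ ^ 2 / 2 + senPotential m 0) atTop atTop :=
    tendsto_atTop_add_const_right _ _
      ((tendsto_pow_atTop two_ne_zero).comp hdiv |>.atTop_div_const two_pos)
  refine hnorm_sq.congr fun t => ?_
  rw [norm_sq_eq_two_mul_senPotential_sub hs hv hode hs0 hv0 t, Function.comp_apply]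
  ring
end
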